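/- Assume Martin's Axiom MA_κ. Then every well-stratified tree T with no uncountable branches and |T| ≤ κ admits a strictly monotonic map into ℚ. -/

import Mathlib

/-!
Under `MA_κ` every uncountable set `V` of nodes contains an uncountable antichain. If uncountably
many nodes of `V` have only countably many successors in `V`, a maximal antichain among them is
uncountable. Otherwise removing them leaves an uncountable `W` in which every node has uncountably
many successors. If `W`, ordered upside down, is not ccc, an uncountable family of pairwise
incompatible nodes is an antichain. If it is ccc and all rank levels of `W` are countable, a filter
meeting the dense sets "rank at least `rank x`" is a chain, hence countable, whose ranks are cofinal
in `W`; this would make `W` countable. So some level, an antichain, is uncountable.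

This makes the specialising poset ccc: by the Δ-system lemma, an uncountable antichain of
conditions gives an uncountable point-countable family of finite sets of nodes (the new parts of
the domains), any two of which contain comparable nodes. Refining the family one point at a time
into antichains leaves only finitely many members below any node, and this rules out that all
pairs are linked. Finally `MA_κ`, applied to the `|T|` dense sets "`x` is in the domain", yields a
filter whose union is a strictly monotone `T → ℚ`.
-/

/-- A partial order is rooted if it has a minimum element. -/
def IsRooted (X : Type*) [PartialOrder X] : Prop := ∃ r : X, ∀ x, r ≤ x

/-- The set of predecessors of every element is linearly ordered. -/
def DownLinear (X : Type*) [PartialOrder X] : Prop :=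
  ∀ x y z : X, y ≤ x → z ≤ x → y ≤ z ∨ z ≤ y

/-- A well-stratified tree: a rooted partial order in which the set of
predecessors of every element is well-ordered. -/
def IsWSTree (T : Type*) [PartialOrder T] : Prop :=
  IsRooted T ∧ DownLinear T ∧ ∀ x : T, (Set.Iio x).IsWF

/-- A filter on a forcing poset: nonempty, upwards closed and downwards
directed. -/
def IsPosetFilter {P : Type*} [PartialOrder P] (F : Set P) : Prop :=
  F.Nonempty ∧ (∀ p ∈ F, ∀ q, p ≤ q → q ∈ F) ∧
    ∀ p ∈ F, ∀ q ∈ F, ∃ r ∈ F, r ≤ p ∧ r ≤ q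

/-- A forcing poset (a partial order with a maximum element) is ccc if every
set of pairwise incompatible elements is countable. -/
def ForcingCCC (P : Type*) [PartialOrder P] : Prop :=
  ∀ A : Set P, (A.Pairwise fun p q => ¬ ∃ r : P, r ≤ p ∧ r ≤ q) → A.Countable

/-- Martin's Axiom at `κ`: for every ccc forcing poset and every family of at
most `κ`-many dense subsets there is a filter meeting all of them. -/
def MartinsAxiom (κ : Cardinal) : Prop :=
  ∀ (P : Type) [PartialOrder P] [OrderTop P], ForcingCCC P →
    ∀ (ι : Type) (D : ι → Set P), Cardinal.mk ι ≤ κ →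
      (∀ i, ∀ p : P, ∃ q ≤ p, q ∈ D i) →
      ∃ F : Set P, IsPosetFilter F ∧ ∀ i, (F ∩ D i).Nonempty

open Set Function

section Countability

variable {ι α β : Type*}

theorem Set.Countable.of_image_of_countable_fibers {f : α → β} {s : Set α}
    (himg : (f '' s).Countable) (hfib : ∀ b, {a ∈ s | f a = b}.Countable) : s.Countable :=
  (himg.biUnion fun b _ => hfib b).mono fun a ha =>
    mem_biUnion (mem_image_of_mem f ha) (show a ∈ {x ∈ s | f x = f a} from ⟨ha, rfl⟩)

theorem exists_uncountable_fiber [Countable β] {s : Set α} (hs : ¬s.Countable) (f : α → β) :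
    ∃ b, ¬{a ∈ s | f a = b}.Countable := by
  by_contra! h
  exact hs (.of_image_of_countable_fibers (to_countable _) h)

theorem exists_uncountable_pairwise {r : α → α → Prop} [Std.Symm r] {S : Set α}
    (hS : ¬S.Countable) (hconf : ∀ a ∈ S, {b ∈ S | ¬r a b}.Countable) :
    ∃ A ⊆ S, ¬A.Countable ∧ A.Pairwise r := by
  obtain ⟨A, -, hA⟩ := zorn_subset_nonempty {A | A ⊆ S ∧ A.Pairwise r}
    (fun c hcS hc _ => ⟨⋃₀ c, ⟨sUnion_subset fun A hA => (hcS hA).1,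
      (pairwise_sUnion hc.directedOn).2 fun A hA => (hcS hA).2⟩, fun _ => subset_sUnion_of_mem⟩)
    ∅ ⟨empty_subset S, pairwise_empty r⟩
  refine ⟨A, hA.prop.1, fun hAc => ?_, hA.prop.2⟩
  have hbad : (A ∪ ⋃ a ∈ A, {b ∈ S | ¬r a b}).Countable :=
    hAc.union (hAc.biUnion fun a ha => hconf a (hA.prop.1 ha))
  obtain ⟨b, hbS, hb⟩ := not_subset.1 fun h => hS (hbad.mono h)
  have hbA : b ∉ A := fun h => hb (.inl h)
  have hrb : ∀ a ∈ A, r a b := fun a ha => by_contra fun h => hb (.inr (mem_biUnion ha ⟨hbS, h⟩))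
  have hins : insert b A ∈ {A | A ⊆ S ∧ A.Pairwise r} := ⟨insert_subset hbS hA.prop.1,
    hA.prop.2.insert_of_symm fun a ha _ => Std.Symm.symm _ _ (hrb a ha)⟩
  exact hbA (hA.le_of_ge hins (subset_insert b A) (mem_insert b A))

theorem exists_uncountable_pairwiseDisjoint {Z : Set ι} (hZ : ¬Z.Countable) (F : ι → Finset α)
    (hF : ∀ x, {i ∈ Z | x ∈ F i}.Countable) :
    ∃ Z' ⊆ Z, ¬Z'.Countable ∧ Z'.Pairwise (Disjoint on F) := by
  refine exists_uncountable_pairwise hZ fun i _ =>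
    ((F i).countable_toSet.biUnion fun x _ => hF x).mono ?_
  rintro j ⟨hj, hij⟩
  obtain ⟨x, hxi, hxj⟩ := Finset.not_disjoint_iff.1 hij
  exact mem_biUnion hxi ⟨hj, hxj⟩

theorem exists_uncountable_deltaSystem_of_card_le [DecidableEq α] (n : ℕ) {Z : Set ι}
    (hZ : ¬Z.Countable) (F : ι → Finset α) (hcard : ∀ i ∈ Z, (F i).card ≤ n) :
    ∃ Z' ⊆ Z, ¬Z'.Countable ∧ ∃ R, Z'.Pairwise fun i j => F i ∩ F j = R := by
  induction n generalizing Z F with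
  | zero =>
    refine ⟨Z, subset_rfl, hZ, ∅, fun i hi j _ _ => ?_⟩
    simp [Finset.card_eq_zero.1 (Nat.le_zero.1 (hcard i hi))]
  | succ n ih =>
    by_cases hx : ∃ x, ¬{i ∈ Z | x ∈ F i}.Countable
    · obtain ⟨x, hx⟩ := hx
      obtain ⟨Z', hZ', hZ'c, R, hR⟩ := ih hx (fun i => (F i).erase x) fun i hi => by
        rw [Finset.card_erase_of_mem hi.2]; have := hcard i hi.1; omega
      refine ⟨Z', hZ'.trans (sep_subset _ _), hZ'c, insert x R, fun i hi j hj hij => ?_⟩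
      have hxi := (hZ' hi).2
      have hxj := (hZ' hj).2
      rw [← hR hi hj hij]
      ext y
      by_cases hy : y = x <;> simp_all
    · push Not at hx
      obtain ⟨Z', hZ', hZ'c, hdisj⟩ := exists_uncountable_pairwiseDisjoint hZ F hx
      exact ⟨Z', hZ', hZ'c, ∅, fun i hi j hj hij =>
        Finset.disjoint_iff_inter_eq_empty.1 (hdisj hi hj hij)⟩

theorem exists_uncountable_deltaSystem [DecidableEq α] {Z : Set ι} (hZ : ¬Z.Countable)
    (F : ι → Finset α) : ∃ Z' ⊆ Z, ¬Z'.Countable ∧ ∃ R, Z'.Pairwise fun i j => F i ∩ F j = R := by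
  obtain ⟨n, hn⟩ := exists_uncountable_fiber hZ fun i => (F i).card
  obtain ⟨Z', hZ', hZ'c, hR⟩ := exists_uncountable_deltaSystem_of_card_le n hn F fun i hi => hi.2.le
  exact ⟨Z', hZ'.trans (sep_subset _ _), hZ'c, hR⟩

end Countability

section Tree

variable {T : Type*} [PartialOrder T]

theorem wellFoundedLT_of_isWF_Iio (h : ∀ x : T, (Iio x).IsWF) : WellFoundedLT T :=
  ⟨⟨fun a => ((WellFoundedOn.acc_iff_wellFoundedOn (a := a)).out 0 2).2 <| by
    simp only [Relation.transGen_eq_self]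
    exact h a⟩⟩

theorem IsChain.countable_of_isMaxChain (hcb : ∀ B : Set T, IsMaxChain (· ≤ ·) B → B.Countable)
    {C : Set T} (hC : IsChain (· ≤ ·) C) : C.Countable :=
  let ⟨M, hM, hCM⟩ := hC.exists_maxChain
  (hcb M hM).mono hCM

theorem DownLinear.isChain_Iic (hDL : DownLinear T) (x : T) : IsChain (· ≤ ·) (Iic x) :=
  fun a ha b hb _ => hDL x a b ha hb

theorem DownLinear.le_or_le_of_le_coe (hDL : DownLinear T) {x y : T} {r : WithTop Tᵒᵈ}
    (hx : r ≤ (OrderDual.toDual x : Tᵒᵈ)) (hy : r ≤ (OrderDual.toDual y : Tᵒᵈ)) :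
    x ≤ y ∨ y ≤ x := by
  induction r using WithTop.recTopCoe with
  | top => exact absurd hx (WithTop.not_top_le_coe _)
  | coe r =>
    exact hDL (OrderDual.ofDual r) x y (OrderDual.le_toDual.1 (WithTop.coe_le_coe.1 hx))
      (OrderDual.le_toDual.1 (WithTop.coe_le_coe.1 hy))

theorem exists_uncountable_antichain_of_countable_Ioi (hIic : ∀ x : T, (Iic x).Countable)
    {S : Set T} (hS : ¬S.Countable) (hup : ∀ x ∈ S, (S ∩ Ioi x).Countable) :
    ∃ A ⊆ S, ¬A.Countable ∧ IsAntichain (· ≤ ·) A := by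
  obtain ⟨A, hAS, hA, hAi⟩ := exists_uncountable_pairwise (r := IncompRel (· ≤ ·)) hS
    fun x hx => ((hIic x).union (hup x hx)).mono fun y ⟨hy, hxy⟩ => by
      by_cases hyx : y ≤ x
      · exact .inl hyx
      · exact .inr ⟨hy, lt_of_le_of_ne (not_not.1 fun h => hxy ⟨h, hyx⟩) fun h => hyx h.ge⟩
  exact ⟨A, hAS, hA, fun a ha b hb hab => (hAi ha hb hab).1⟩

theorem exists_uncountable_antichain_of_not_forcingCCC (h : ¬ForcingCCC (WithTop Tᵒᵈ)) :
    ∃ A : Set T, ¬A.Countable ∧ IsAntichain (· ≤ ·) A := by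
  simp only [ForcingCCC, not_forall, exists_prop] at h
  obtain ⟨A, hA, hAc⟩ := h
  let φ : T → WithTop Tᵒᵈ := fun x => (OrderDual.toDual x : Tᵒᵈ)
  refine ⟨φ ⁻¹' A, fun hc => hAc (((hc.image φ).insert ⊤).mono fun p hp => ?_),
    fun x hx y hy hxy hle => hA hx hy (fun h => hxy (WithTop.coe_injective h))
      ⟨φ y, WithTop.coe_le_coe.2 (OrderDual.toDual_le_toDual.2 hle), le_rfl⟩⟩
  induction p using WithTop.recTopCoe with
  | top => exact mem_insert _ _
  | coe p => exact mem_insert_of_mem _ ⟨OrderDual.ofDual p, (hp :), rfl⟩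

section Rank

variable [WellFoundedLT T]

theorem exists_le_rank_eq {a : T} {o : Ordinal} (h : o ≤ IsWellFounded.rank (· < ·) a) :
    ∃ b ≤ a, IsWellFounded.rank (· < ·) b = o := by
  induction a using WellFoundedLT.induction with
  | ind a ih =>
    obtain rfl | h := h.eq_or_lt
    · exact ⟨a, le_rfl, rfl⟩
    rw [IsWellFounded.rank_eq, Ordinal.lt_iSup_iff] at h
    obtain ⟨⟨b, hba⟩, hb⟩ := h
    obtain ⟨c, hcb, hc⟩ := ih b hba (Order.lt_succ_iff.1 hb)
    exact ⟨c, hcb.trans hba.le, hc⟩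

theorem countable_setOf_rank_le
    (hlev : ∀ o, {x : T | IsWellFounded.rank (· < ·) x = o}.Countable) {a : T}
    (ha : (Iic a).Countable) :
    {x : T | IsWellFounded.rank (· < ·) x ≤ IsWellFounded.rank (· < ·) a}.Countable :=
  (ha.biUnion fun b _ => hlev (IsWellFounded.rank (· < ·) b)).mono fun _ hx =>
    let ⟨_, hba, hb⟩ := exists_le_rank_eq hx
    mem_biUnion hba hb.symm

theorem isAntichain_setOf_rank_eq (o : Ordinal) :
    IsAntichain (· ≤ ·) {x : T | IsWellFounded.rank (· < ·) x = o} :=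
  fun _ hx _ hy hxy hle => (WellFoundedLT.rank_strictMono (hle.lt_of_ne hxy)).ne (hx.trans hy.symm)

end Rank

end Tree

section MartinsAxiom

variable {κ : Cardinal} {T : Type} [PartialOrder T] [WellFoundedLT T]

theorem MartinsAxiom.exists_uncountable_setOf_rank_eq (hMA : MartinsAxiom κ)
    (hcard : Cardinal.mk T ≤ κ) (hDL : DownLinear T)
    (hchain : ∀ C : Set T, IsChain (· ≤ ·) C → C.Countable) [Nonempty T]
    (hrich : ∀ x : T, ¬(Ioi x).Countable) (hccc : ForcingCCC (WithTop Tᵒᵈ)) :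
    ∃ o, ¬{x : T | IsWellFounded.rank (· < ·) x = o}.Countable := by
  by_contra! hlev
  have hlow (x : T) :
      {y : T | IsWellFounded.rank (· < ·) y ≤ IsWellFounded.rank (· < ·) x}.Countable :=
    countable_setOf_rank_le hlev (hchain _ (hDL.isChain_Iic x))
  let D (x : T) : Set (WithTop Tᵒᵈ) :=
    {p | ∃ y : T, IsWellFounded.rank (· < ·) x ≤ IsWellFounded.rank (· < ·) y ∧
      p = (OrderDual.toDual y : Tᵒᵈ)}
  have hdense (x : T) (p : WithTop Tᵒᵈ) : ∃ q ≤ p, q ∈ D x := by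
    induction p using WithTop.recTopCoe with
    | top => exact ⟨(OrderDual.toDual x : Tᵒᵈ), le_top, x, le_rfl, rfl⟩
    | coe p =>
      obtain ⟨y, hpy, hxy⟩ := not_subset.1 fun h => hrich (OrderDual.ofDual p) ((hlow x).mono h)
      exact ⟨(OrderDual.toDual y : Tᵒᵈ), WithTop.coe_le_coe.2 (OrderDual.le_toDual.2 hpy.le), y,
        le_of_not_ge hxy, rfl⟩
  obtain ⟨G, hG, hGD⟩ := hMA _ hccc T D hcard hdense
  let C : Set T := {x | ((OrderDual.toDual x : Tᵒᵈ) : WithTop Tᵒᵈ) ∈ G}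
  have hC : C.Countable := hchain C fun x hx y hy _ =>
    let ⟨_, _, hrx, hry⟩ := hG.2.2 _ hx _ hy
    hDL.le_or_le_of_le_coe hrx hry
  obtain ⟨x⟩ := ‹Nonempty T›
  refine hrich x ((hC.biUnion fun y _ => hlow y).mono fun z _ => ?_)
  obtain ⟨_, hpG, y, hzy, rfl⟩ := hGD z
  exact mem_biUnion hpG hzy

theorem MartinsAxiom.exists_uncountable_antichain_of_uncountable_Ioi (hMA : MartinsAxiom κ)
    (hcard : Cardinal.mk T ≤ κ) (hDL : DownLinear T)
    (hchain : ∀ C : Set T, IsChain (· ≤ ·) C → C.Countable) [Nonempty T]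
    (hrich : ∀ x : T, ¬(Ioi x).Countable) :
    ∃ A : Set T, ¬A.Countable ∧ IsAntichain (· ≤ ·) A := by
  by_cases hccc : ForcingCCC (WithTop Tᵒᵈ)
  · obtain ⟨o, ho⟩ := hMA.exists_uncountable_setOf_rank_eq hcard hDL hchain hrich hccc
    exact ⟨_, ho, isAntichain_setOf_rank_eq o⟩
  · exact exists_uncountable_antichain_of_not_forcingCCC hccc

theorem MartinsAxiom.exists_uncountable_antichain (hMA : MartinsAxiom κ)
    (hcard : Cardinal.mk T ≤ κ) (hDL : DownLinear T)
    (hchain : ∀ C : Set T, IsChain (· ≤ ·) C → C.Countable) {V : Set T} (hV : ¬V.Countable) :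
    ∃ A ⊆ V, ¬A.Countable ∧ IsAntichain (· ≤ ·) A := by
  let P := {x ∈ V | (V ∩ Ioi x).Countable}
  by_cases hP : P.Countable
  swap
  · obtain ⟨A, hAP, hA, hAa⟩ := exists_uncountable_antichain_of_countable_Ioi
      (fun x => hchain _ (hDL.isChain_Iic x)) hP
      fun x hx => hx.2.mono (inter_subset_inter_left _ (sep_subset _ _))
    exact ⟨A, hAP.trans (sep_subset _ _), hA, hAa⟩
  let W := V \ P
  have hW : ¬W.Countable := fun h => hV (h.of_sdiff hP)
  have hrich (x : W) : ¬(Ioi x).Countable := fun hx => x.2.2 ⟨x.2.1,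
    ((hx.image Subtype.val).union hP).mono fun y ⟨hyV, hxy⟩ => by
      by_cases hyP : y ∈ P
      · exact .inr hyP
      · exact .inl ⟨⟨y, hyV, hyP⟩, hxy, rfl⟩⟩
  have : Nonempty W := (Set.Infinite.nonempty fun h => hW h.countable).to_subtype
  obtain ⟨A, hA, hAa⟩ := hMA.exists_uncountable_antichain_of_uncountable_Ioi
    ((Cardinal.mk_set_le W).trans hcard) (fun x y z => hDL x y z)
    (fun C hC => countable_of_injective_of_countable_image Subtype.val_injective.injOn
      (hchain _ (hC.image (OrderEmbedding.subtype _))))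
    hrich
  exact ⟨Subtype.val '' A, fun _ ⟨x, _, hx⟩ => hx ▸ x.2.1,
    fun h => hA (countable_of_injective_of_countable_image Subtype.val_injective.injOn h),
    hAa.image_embedding (OrderEmbedding.subtype _)⟩

end MartinsAxiom

section Baumgartner

variable {ι T : Type*} [PartialOrder T]

theorem exists_uncountable_pairwise_incompRel_comp
    (hanti : ∀ V : Set T, ¬V.Countable → ∃ A ⊆ V, ¬A.Countable ∧ IsAntichain (· ≤ ·) A)
    {Z : Set ι} (hZ : ¬Z.Countable) (f : ι → T) (hf : ∀ x, {i ∈ Z | f i = x}.Countable) :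
    ∃ Z' ⊆ Z, ¬Z'.Countable ∧ Z'.Pairwise (IncompRel (· ≤ ·) on f) := by
  have : Nonempty ι := (Set.Infinite.nonempty fun h => hZ h.countable).to_subtype.map Subtype.val
  obtain ⟨A, hAZ, hA, hAa⟩ := hanti (f '' Z) fun h => hZ (h.of_image_of_countable_fibers hf)
  have hsurj : SurjOn f Z A := (surjOn_image f Z).mono subset_rfl hAZ
  refine ⟨invFunOn f Z '' A, hsurj.mapsTo_invFunOn.image_subset,
    fun h => hA (hsurj.image_invFunOn_image ▸ h.image f), ?_⟩
  rintro _ ⟨x, hx, rfl⟩ _ ⟨y, hy, rfl⟩ hne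
  have hxy : x ≠ y := fun h => hne (h ▸ rfl)
  simp only [onFun, hsurj.rightInvOn_invFunOn hx, hsurj.rightInvOn_invFunOn hy]
  exact ⟨hAa hx hy hxy, hAa hy hx hxy.symm⟩

theorem exists_uncountable_finite_setOf_exists_le_of_card_eq
    (hanti : ∀ V : Set T, ¬V.Countable → ∃ A ⊆ V, ¬A.Countable ∧ IsAntichain (· ≤ ·) A)
    (hDL : DownLinear T) (n : ℕ) {Z : Set ι} (hZ : ¬Z.Countable) (F : ι → Finset T)
    (hF : ∀ x, {i ∈ Z | x ∈ F i}.Countable) (hcard : ∀ i ∈ Z, (F i).card = n) :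
    ∃ Z' ⊆ Z, ¬Z'.Countable ∧ ∀ y, {i ∈ Z' | ∃ x ∈ F i, x ≤ y}.Finite := by
  classical
  induction n generalizing Z F with
  | zero =>
    refine ⟨Z, subset_rfl, hZ, fun y => (finite_empty).subset ?_⟩
    rintro i ⟨hi, x, hx, -⟩
    simp [Finset.card_eq_zero.1 (hcard i hi)] at hx
  | succ n ih =>
    -- peel off one point `a i` of each `F i`, making these points pairwise incomparable
    have hne (i : ι) (hi : i ∈ Z) : (F i).Nonempty := Finset.card_pos.1 (hcard i hi ▸ n.succ_pos)
    have : Nonempty T := by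
      obtain ⟨i, hi⟩ := Set.Infinite.nonempty fun h => hZ h.countable
      exact (hne i hi).to_subtype.map Subtype.val
    choose! a ha using hne
    obtain ⟨Z₁, hZ₁, hZ₁c, hZ₁a⟩ := exists_uncountable_pairwise_incompRel_comp hanti hZ a
      fun x => (hF x).mono fun i hi => mem_sep hi.1 (hi.2 ▸ ha i hi.1)
    obtain ⟨Z₂, hZ₂, hZ₂c, hfin⟩ := ih hZ₁c (fun i => (F i).erase (a i))
      (fun x => (hF x).mono fun i hi => mem_sep (hZ₁ hi.1) (Finset.mem_of_mem_erase hi.2))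
      fun i hi => by rw [Finset.card_erase_of_mem (ha i (hZ₁ hi)), hcard i (hZ₁ hi)]; rfl
    have hsub (y : T) : {i ∈ Z₁ | a i ≤ y}.Subsingleton := fun i hi j hj => by
      by_contra hij
      exact (hDL y (a i) (a j) hi.2 hj.2).elim (hZ₁a hi.1 hj.1 hij).1 (hZ₁a hi.1 hj.1 hij).2
    refine ⟨Z₂, hZ₂.trans hZ₁, hZ₂c, fun y => ((hfin y).union (hsub y).finite).subset ?_⟩
    rintro i ⟨hi, x, hx, hxy⟩
    by_cases hxa : x = a i
    · exact .inr ⟨hZ₂ hi, hxa ▸ hxy⟩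
    · exact .inl ⟨hi, x, Finset.mem_erase.2 ⟨hxa, hx⟩, hxy⟩

theorem exists_uncountable_finite_setOf_exists_le
    (hanti : ∀ V : Set T, ¬V.Countable → ∃ A ⊆ V, ¬A.Countable ∧ IsAntichain (· ≤ ·) A)
    (hDL : DownLinear T) {Z : Set ι} (hZ : ¬Z.Countable) (F : ι → Finset T)
    (hF : ∀ x, {i ∈ Z | x ∈ F i}.Countable) :
    ∃ Z' ⊆ Z, ¬Z'.Countable ∧ ∀ y, {i ∈ Z' | ∃ x ∈ F i, x ≤ y}.Finite := by
  obtain ⟨n, hn⟩ := exists_uncountable_fiber hZ fun i => (F i).card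
  obtain ⟨Z', hZ', hZ'c, hfin⟩ := exists_uncountable_finite_setOf_exists_le_of_card_eq hanti hDL n
    hn F (fun x => (hF x).mono fun i hi => mem_sep hi.1.1 hi.2) fun i hi => hi.2
  exact ⟨Z', hZ'.trans (sep_subset _ _), hZ'c, hfin⟩

theorem exists_ne_forall_incompRel
    (hanti : ∀ V : Set T, ¬V.Countable → ∃ A ⊆ V, ¬A.Countable ∧ IsAntichain (· ≤ ·) A)
    (hDL : DownLinear T) {Z : Set ι} (hZ : ¬Z.Countable) (F : ι → Finset T)
    (hF : ∀ x, {i ∈ Z | x ∈ F i}.Countable) :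
    ∃ i ∈ Z, ∃ j ∈ Z, i ≠ j ∧ ∀ x ∈ F i, ∀ y ∈ F j, IncompRel (· ≤ ·) x y := by
  obtain ⟨Z', hZ'Z, hZ', hfin⟩ := exists_uncountable_finite_setOf_exists_le hanti hDL hZ F hF
  let below (j : ι) : Set ι := ⋃ y ∈ F j, {i ∈ Z' | ∃ x ∈ F i, x ≤ y}
  have hbelow (j : ι) : (below j).Finite := (F j).finite_toSet.biUnion fun y _ => hfin y
  obtain ⟨S, hSZ', hS, hSinf⟩ :=
    Set.Infinite.exists_subset_countable_infinite fun h => hZ' h.countable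
  obtain ⟨j, hjZ', hj⟩ := not_subset.1 fun h =>
    hZ' ((hS.union (hS.biUnion fun i _ => (hbelow i).countable)).mono h)
  have hjS : j ∉ S := fun h => hj (.inl h)
  by_contra! hlink
  -- every `i ∈ S` lies below `j`, since `j` does not lie below `i`
  refine hSinf ((hbelow j).subset fun i hi => ?_)
  obtain ⟨x, hx, y, hy, hxy⟩ := hlink i (hZ'Z (hSZ' hi)) j (hZ'Z hjZ') fun h => hjS (h ▸ hi)
  by_cases hyx : y ≤ x
  · exact (hj (.inr (mem_biUnion hi (mem_biUnion hx ⟨hjZ', y, hy, hyx⟩)))).elim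
  · exact mem_biUnion hy ⟨hSZ' hi, x, hx, not_not.1 fun h => hxy ⟨h, hyx⟩⟩

end Baumgartner

def IsStrictMonoGraph {T : Type*} [Preorder T] (s : Finset (T × ℚ)) : Prop :=
  ∀ z ∈ s, ∀ w ∈ s, (z.1 < w.1 → z.2 < w.2) ∧ (z.1 = w.1 → z.2 = w.2)

def Specializing (T : Type*) [PartialOrder T] : Type _ :=
  {s : Finset (T × ℚ) // IsStrictMonoGraph s}

namespace Specializing

variable {T : Type*} [PartialOrder T]

instance : PartialOrder (Specializing T) where
  le p q := q.1 ⊆ p.1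
  le_refl p := Finset.Subset.refl p.1
  le_trans _ _ _ hpq hqr := hqr.trans hpq
  le_antisymm _ _ hpq hqp := Subtype.ext (hqp.antisymm hpq)

instance : OrderTop (Specializing T) where
  top := ⟨∅, by simp [IsStrictMonoGraph]⟩
  le_top p := Finset.empty_subset p.1

theorem exists_le_mem (p : Specializing T) (x : T) : ∃ q ≤ p, ∃ v : ℚ, (x, v) ∈ q.1 := by
  classical
  by_cases hx : ∃ v, (x, v) ∈ p.1
  · exact ⟨p, le_rfl, hx⟩
  push Not at hx
  obtain ⟨v, hlo, hhi⟩ := Finset.exists_between' ((p.1.filter (·.1 < x)).image Prod.snd)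
    ((p.1.filter (x < ·.1)).image Prod.snd) (by
      simp only [Finset.mem_image, Finset.mem_filter]
      rintro _ ⟨z, ⟨hz, hzx⟩, rfl⟩ _ ⟨w, ⟨hw, hxw⟩, rfl⟩
      exact (p.2 z hz w hw).1 (hzx.trans hxw))
  refine ⟨⟨insert (x, v) p.1, ?_⟩, Finset.subset_insert _ _, v, Finset.mem_insert_self _ _⟩
  have hne (z) (hz : z ∈ p.1) : z.1 ≠ x := fun h => hx z.2 (h ▸ hz)
  intro z hz w hw
  rcases Finset.mem_insert.1 hz with rfl | hz <;> rcases Finset.mem_insert.1 hw with rfl | hw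
  · exact ⟨fun h => (lt_irrefl _ h).elim, fun _ => rfl⟩
  · exact ⟨fun h => hhi _ (Finset.mem_image_of_mem _ (Finset.mem_filter.2 ⟨hw, h⟩)),
      fun h => (hne w hw h.symm).elim⟩
  · exact ⟨fun h => hlo _ (Finset.mem_image_of_mem _ (Finset.mem_filter.2 ⟨hz, h⟩)),
      fun h => (hne z hz h).elim⟩
  · exact p.2 z hz w hw

theorem exists_le_le_of_forall_incompRel {p q : Specializing T}
    (h : ∀ z ∈ p.1, ∀ w ∈ q.1, z ∉ q.1 → w ∉ p.1 → IncompRel (· ≤ ·) z.1 w.1) :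
    ∃ r, r ≤ p ∧ r ≤ q := by
  classical
  have hcoh {z w : T × ℚ} (hzw : IncompRel (· ≤ ·) z.1 w.1) :
      (z.1 < w.1 → z.2 < w.2) ∧ (z.1 = w.1 → z.2 = w.2) :=
    ⟨fun h => (hzw.not_lt h).elim, fun h => (hzw.ne h).elim⟩
  refine ⟨⟨p.1 ∪ q.1, fun z hz w hw => ?_⟩, Finset.subset_union_left, Finset.subset_union_right⟩
  rcases Finset.mem_union.1 hz with hzp | hzq <;> rcases Finset.mem_union.1 hw with hwp | hwq
  · exact p.2 z hzp w hwp
  · by_cases hzq : z ∈ q.1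
    · exact q.2 z hzq w hwq
    by_cases hwp : w ∈ p.1
    · exact p.2 z hzp w hwp
    exact hcoh (h z hzp w hwq hzq hwp)
  · by_cases hwq : w ∈ q.1
    · exact q.2 z hzq w hwq
    by_cases hzp : z ∈ p.1
    · exact p.2 z hzp w hwp
    exact hcoh (h w hwp z hzq hwq hzp).symm
  · exact q.2 z hzq w hwq

theorem forcingCCC (hDL : DownLinear T)
    (hanti : ∀ V : Set T, ¬V.Countable → ∃ A ⊆ V, ¬A.Countable ∧ IsAntichain (· ≤ ·) A) :
    ForcingCCC (Specializing T) := by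
  classical
  intro A hA
  by_contra hAc
  obtain ⟨A', hA'A, hA'c, R, hR⟩ := exists_uncountable_deltaSystem hAc fun p : Specializing T => p.1
  let F (p : Specializing T) : Finset T := (p.1 \ R).image Prod.fst
  have hF (x : T) : {p ∈ A' | x ∈ F p}.Countable := by
    refine (countable_iUnion fun v : ℚ =>
      Subsingleton.countable (s := {p ∈ A' | (x, v) ∈ p.1 \ R}) ?_).mono ?_
    · intro p hp q hq
      by_contra hpq
      have hxv := Finset.mem_sdiff.1 hp.2
      exact hxv.2 (hR hp.1 hq.1 hpq ▸ Finset.mem_inter.2 ⟨hxv.1, (Finset.mem_sdiff.1 hq.2).1⟩)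
    · rintro p ⟨hp, hx⟩
      obtain ⟨z, hz, rfl⟩ := Finset.mem_image.1 hx
      exact mem_iUnion.2 ⟨z.2, hp, hz⟩
  obtain ⟨p, hp, q, hq, hpq, hinc⟩ := exists_ne_forall_incompRel hanti hDL hA'c F hF
  refine hA (hA'A hp) (hA'A hq) hpq (exists_le_le_of_forall_incompRel fun z hz w hw hzq hwp =>
    hinc _ (Finset.mem_image_of_mem _ (Finset.mem_sdiff.2 ⟨hz, fun hzR => hzq ?_⟩)) _
      (Finset.mem_image_of_mem _ (Finset.mem_sdiff.2 ⟨hw, fun hwR => hwp ?_⟩)))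
  · exact (Finset.mem_inter.1 ((hR hp hq hpq).symm ▸ hzR)).2
  · exact (Finset.mem_inter.1 ((hR hp hq hpq).symm ▸ hwR)).1

end Specializing

/-- Under `MA_κ`, every well-stratified tree of size at most `κ` with no
uncountable branches admits a strictly monotonic map into ℚ. -/
theorem MA_wstree_rat_gradable (κ : Cardinal) (hMA : MartinsAxiom κ)
    (T : Type) [PartialOrder T] (hT : IsWSTree T)
    (hcb : ∀ B : Set T, IsMaxChain (· ≤ ·) B → B.Countable)
    (hcard : Cardinal.mk T ≤ κ) :
    ∃ f : T → ℚ, StrictMono f := by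
  obtain ⟨-, hDL, hWF⟩ := hT
  have := wellFoundedLT_of_isWF_Iio hWF
  have hchain (C : Set T) (hC : IsChain (· ≤ ·) C) : C.Countable := hC.countable_of_isMaxChain hcb
  have hccc := Specializing.forcingCCC hDL fun V hV =>
    hMA.exists_uncountable_antichain hcard hDL hchain hV
  obtain ⟨G, hG, hGx⟩ := hMA (Specializing T) hccc T (fun x => {p | ∃ v, (x, v) ∈ p.1}) hcard
    fun x p => p.exists_le_mem x
  choose p hpG f hf using hGx
  refine ⟨f, fun x y hxy => ?_⟩
  obtain ⟨r, -, hrx, hry⟩ := hG.2.2 _ (hpG x) _ (hpG y)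
  exact (r.2 _ (hrx (hf x)) _ (hry (hf y))).1 hxy
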